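/- arXiv:1704.05257 — 7 statements merged into one kernel-verified Lean document; each statement's English description precedes it below -/
import Mathlib

section
/- Let G be a connected graph that is not complete, and let e be an edge not in G. Then the hyper-Wiener index of G+e is strictly less than that of G. -/
open Finset
open scoped Classical

/-- Wiener index: sum of distances over unordered pairs of vertices. -/
noncomputable def wiener {V : Type*} [Fintype V] (G : SimpleGraph V) : ℚ :=
  (1/2) * ∑ u : V, ∑ v : V, (G.dist u v : ℚ)

/-- Harary index: sum of reciprocal distances over unordered pairs of distinct vertices. -/
noncomputable def harary {V : Type*} [Fintype V] (G : SimpleGraph V) : ℚ :=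
  (1/2) * ∑ p ∈ Finset.univ.offDiag, (1 : ℚ) / (G.dist p.1 p.2 : ℚ)

/-- Hyper-Wiener index: (1/2) Σ_{unordered pairs} (d + d²). -/
noncomputable def hyperWiener {V : Type*} [Fintype V] (G : SimpleGraph V) : ℚ :=
  (1/4) * ∑ u : V, ∑ v : V, ((G.dist u v : ℚ) + (G.dist u v : ℚ)^2)

/-- Eccentricity of a vertex: maximum distance to any other vertex. -/
noncomputable def ecc {V : Type*} [Fintype V] (G : SimpleGraph V) (u : V) : ℕ :=
  Finset.univ.sup (fun v => G.dist u v)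

/-- Connective eccentricity index: Σ_u deg(u)/ε(u). -/
noncomputable def cei {V : Type*} [Fintype V] (G : SimpleGraph V) : ℚ :=
  ∑ u : V, (G.degree u : ℚ) / (ecc G u : ℚ)

/-- Eccentricity distance sum: Σ_u ε(u)·D(u). -/
noncomputable def eds {V : Type*} [Fintype V] (G : SimpleGraph V) : ℚ :=
  ∑ u : V, (ecc G u : ℚ) * ∑ v : V, (G.dist u v : ℚ)

lemma hyperWiener_lt_of_dist_le_of_dist_lt {V : Type*} [Fintype V] {G H : SimpleGraph V}
    (hle : ∀ a b, H.dist a b ≤ G.dist a b) {u v : V} (hlt : H.dist u v < G.dist u v) :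
    hyperWiener H < hyperWiener G := by
  have hf : StrictMono fun d : ℕ => (d : ℚ) + (d : ℚ) ^ 2 := fun m n h => by
    have : (m : ℚ) < n := by exact_mod_cast h
    dsimp only
    gcongr
  have hrow : ∀ a, ∑ b, ((H.dist a b : ℚ) + (H.dist a b : ℚ) ^ 2)
      ≤ ∑ b, ((G.dist a b : ℚ) + (G.dist a b : ℚ) ^ 2) :=
    fun a => sum_le_sum fun b _ => hf.monotone (hle a b)
  have hrow_u : ∑ b, ((H.dist u b : ℚ) + (H.dist u b : ℚ) ^ 2)
      < ∑ b, ((G.dist u b : ℚ) + (G.dist u b : ℚ) ^ 2) :=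
    sum_lt_sum (fun b _ => hf.monotone (hle u b)) ⟨v, mem_univ v, hf hlt⟩
  unfold hyperWiener
  exact mul_lt_mul_of_pos_left (sum_lt_sum (fun a _ => hrow a) ⟨u, mem_univ u, hrow_u⟩)
    (by norm_num)

theorem hyperWiener_add_edge_lt_general {V : Type*} [Fintype V] (G : SimpleGraph V)
    (hconn : G.Connected) (u v : V) (hne : u ≠ v) (hadj : ¬ G.Adj u v) :
    hyperWiener (G ⊔ SimpleGraph.fromEdgeSet {s(u, v)}) < hyperWiener G := by
  have hadj' : (G ⊔ SimpleGraph.fromEdgeSet {s(u, v)}).Adj u v := Or.inr (by simp [hne])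
  refine hyperWiener_lt_of_dist_le_of_dist_lt (fun a b => (hconn a b).dist_anti le_sup_left)
    (u := u) (v := v) ?_
  rw [SimpleGraph.dist_eq_one_iff_adj.mpr hadj']
  exact hconn.one_lt_dist_of_ne_of_not_adj hne hadj

/-- Adding an edge between nonadjacent vertices of a connected non-complete graph
strictly decreases the hyper-Wiener index. -/
theorem hyperWiener_add_edge_lt {V : Type*} [Fintype V] (G : SimpleGraph V)
    (hconn : G.Connected) (hG : G ≠ ⊤) (u v : V) (hne : u ≠ v) (hadj : ¬ G.Adj u v) :
    hyperWiener (G ⊔ SimpleGraph.fromEdgeSet {s(u, v)}) < hyperWiener G :=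
  hyperWiener_add_edge_lt_general G hconn u v hne hadj
end

section
/- Let G be a connected graph that is not complete, and let e be an edge not in G. Then the connective eccentricity index of G+e is strictly greater than that of G. -/
open Finset
open scoped Classical

namespace SimpleGraph

variable {V : Type*} {G H : SimpleGraph V} {u v : V}

lemma degree_lt_degree_of_le [Fintype (G.neighborSet u)] [Fintype (H.neighborSet u)]
    (hle : G ≤ H) (hH : H.Adj u v) (hG : ¬G.Adj u v) : G.degree u < H.degree u := by
  simp_rw [← card_neighborSet_eq_degree]
  exact Set.card_lt_card ⟨fun _ hw ↦ hle hw, fun hsub ↦ hG (hsub hH)⟩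

lemma sup_edge_adj (hne : u ≠ v) : (G ⊔ edge u v).Adj u v :=
  Or.inr <| (edge_adj ..).mpr ⟨.inl ⟨rfl, rfl⟩, hne⟩

end SimpleGraph

section Eccentricity

variable {V : Type*} [Fintype V] {G H : SimpleGraph V}

lemma ecc_pos [Nontrivial V] (hconn : G.Connected) (w : V) : 0 < ecc G w := by
  obtain ⟨x, hx⟩ := exists_ne w
  exact (hconn.pos_dist_of_ne hx.symm).trans_le (le_sup (mem_univ x))

lemma ecc_anti (hle : G ≤ H) (hconn : G.Connected) (w : V) : ecc H w ≤ ecc G w :=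
  Finset.sup_le fun x _ ↦ ((hconn w x).dist_anti hle).trans (le_sup (mem_univ x))

/-- Adding edges to a connected graph raises no eccentricity and lowers no degree. -/
lemma cei_lt_cei_of_le [Nontrivial V] (hle : G ≤ H) (hconn : G.Connected) {w : V}
    (hdeg : G.degree w < H.degree w) : cei G < cei H := by
  have hconnH : H.Connected := hconn.mono hle
  refine Finset.sum_lt_sum (fun x _ ↦ ?_) ⟨w, mem_univ w, ?_⟩
  · exact div_le_div₀ (Nat.cast_nonneg _) (Nat.cast_le.mpr (SimpleGraph.degree_le_of_le hle))
      (Nat.cast_pos.mpr (ecc_pos hconnH x)) (Nat.cast_le.mpr (ecc_anti hle hconn x))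
  · exact div_lt_div₀ (Nat.cast_lt.mpr hdeg) (Nat.cast_le.mpr (ecc_anti hle hconn w))
      (Nat.cast_nonneg _) (Nat.cast_pos.mpr (ecc_pos hconnH w))

end Eccentricity

theorem cei_add_edge_gt_general {V : Type*} [Fintype V] (G : SimpleGraph V)
    (hconn : G.Connected) (u v : V) (hne : u ≠ v) (hadj : ¬ G.Adj u v) :
    cei (G ⊔ SimpleGraph.fromEdgeSet {s(u, v)}) > cei G := by
  have : Nontrivial V := ⟨⟨u, v, hne⟩⟩
  refine cei_lt_cei_of_le (H := G ⊔ SimpleGraph.edge u v) le_sup_left hconn (w := u) ?_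
  -- the two degrees are computed with different (classical vs. `Sup`) decidability instances
  convert SimpleGraph.degree_lt_degree_of_le le_sup_left (SimpleGraph.sup_edge_adj hne) hadj
    using 2

/-- Adding an edge between nonadjacent vertices of a connected non-complete graph
strictly increases the connective eccentricity index. -/
theorem cei_add_edge_gt {V : Type*} [Fintype V] (G : SimpleGraph V)
    (hconn : G.Connected) (hG : G ≠ ⊤) (u v : V) (hne : u ≠ v) (hadj : ¬ G.Adj u v) :
    cei (G ⊔ SimpleGraph.fromEdgeSet {s(u, v)}) > cei G :=
  cei_add_edge_gt_general G hconn u v hne hadj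
end

section
/- Let G be a connected graph that is not complete, and let e be an edge not in G. Then the eccentricity distance sum of G+e is strictly less than that of G. -/
open Finset
open scoped Classical

/-!
Adding edges to a connected graph can only shorten distances, so every eccentricity and every
transmission `D(w) = ∑ x, d(w, x)` weakly decreases, and `ξ^d` decreases with them. The new
edge `uv` cuts `d(u, v)` from at least `2` down to `1`, so `D(u)` drops strictly while
`ε(u) ≥ d(u, v) > 0`, which makes the decrease of the term at `u` strict.
-/

namespace SimpleGraph

variable {V : Type*} [Fintype V] {G H : SimpleGraph V}

noncomputable def transmission (G : SimpleGraph V) (u : V) : ℚ :=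
  ∑ v, (G.dist u v : ℚ)

theorem eds_eq_sum_ecc_mul_transmission (G : SimpleGraph V) :
    eds G = ∑ u, (ecc G u : ℚ) * G.transmission u :=
  rfl

theorem dist_le_ecc (G : SimpleGraph V) (u v : V) : G.dist u v ≤ ecc G u :=
  Finset.le_sup (mem_univ v)

theorem Connected.ecc_anti (hG : G.Connected) (hGH : G ≤ H) (u : V) : ecc H u ≤ ecc G u :=
  Finset.sup_mono_fun fun v _ => (hG u v).dist_anti hGH

theorem Connected.transmission_anti (hG : G.Connected) (hGH : G ≤ H) (u : V) :
    H.transmission u ≤ G.transmission u :=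
  sum_le_sum fun v _ => by exact_mod_cast (hG u v).dist_anti hGH

theorem Connected.transmission_lt_of_dist_lt (hG : G.Connected) (hGH : G ≤ H) {u v : V}
    (huv : H.dist u v < G.dist u v) : H.transmission u < G.transmission u :=
  sum_lt_sum (fun x _ => by exact_mod_cast (hG u x).dist_anti hGH)
    ⟨v, mem_univ v, by exact_mod_cast huv⟩

theorem transmission_nonneg (G : SimpleGraph V) (u : V) : 0 ≤ G.transmission u :=
  sum_nonneg fun _ _ => Nat.cast_nonneg _

theorem Connected.eds_lt_of_dist_lt (hG : G.Connected) (hGH : G ≤ H) {u v : V}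
    (huv : H.dist u v < G.dist u v) : eds H < eds G := by
  simp only [eds_eq_sum_ecc_mul_transmission]
  refine sum_lt_sum (fun w _ => ?_) ⟨u, mem_univ u, ?_⟩
  · exact mul_le_mul (by exact_mod_cast hG.ecc_anti hGH w) (hG.transmission_anti hGH w)
      (H.transmission_nonneg w) (Nat.cast_nonneg _)
  · have hecc_pos : (0 : ℚ) < ecc G u := by
      exact_mod_cast (Nat.zero_le _).trans_lt (huv.trans_le (G.dist_le_ecc u v))
    calc (ecc H u : ℚ) * H.transmission u
        ≤ ecc G u * H.transmission u := by
          gcongr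
          · exact H.transmission_nonneg u
          · exact hG.ecc_anti hGH u
      _ < ecc G u * G.transmission u := by
          gcongr
          exact hG.transmission_lt_of_dist_lt hGH huv

end SimpleGraph

theorem eds_add_edge_lt_general {V : Type*} [Fintype V] (G : SimpleGraph V)
    (hconn : G.Connected) (u v : V) (hne : u ≠ v) (hadj : ¬ G.Adj u v) :
    eds (G ⊔ SimpleGraph.fromEdgeSet {s(u, v)}) < eds G := by
  have hdist : (G ⊔ SimpleGraph.fromEdgeSet {s(u, v)}).dist u v < G.dist u v := by
    rw [SimpleGraph.dist_eq_one_iff_adj.mpr (by simp [hne])]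
    exact hconn.one_lt_dist_of_ne_of_not_adj hne hadj
  exact hconn.eds_lt_of_dist_lt le_sup_left hdist

/-- Adding an edge between nonadjacent vertices of a connected non-complete graph
strictly decreases the eccentricity distance sum. -/
theorem eds_add_edge_lt {V : Type*} [Fintype V] (G : SimpleGraph V)
    (hconn : G.Connected) (hG : G ≠ ⊤) (u v : V) (hne : u ≠ v) (hadj : ¬ G.Adj u v) :
    eds (G ⊔ SimpleGraph.fromEdgeSet {s(u, v)}) < eds G :=
  eds_add_edge_lt_general G hconn u v hne hadj
end

section
/- Let G be a bipartite graph with the minimal value of a monotonically decreasing topological index I among all connected bipartite graphs with n vertices and k cut edges e₁,…,e_k. Then every connected component of G − {e₁,…,e_k} is either a complete bipartite graph or a single vertex. -/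
/-!
Adding an edge `ab` between two vertices lying in the same component of `G` minus its bridges
keeps `G` connected and leaves its set of bridges unchanged: no bridge can appear since
`G ≤ G ⊔ ab`, and every bridge `e` of `G` survives because `a` and `b` are already joined in
`G - e`, so that `ab` reconnects nothing. If moreover `a` and `b` get different colours in a
2-colouring of `G`, the new graph is still bipartite. By minimality of `I G` and strict
monotonicity of `I`, no such edge is missing from `G`; hence inside each component of `G` minus
its bridges, the two colour classes are completely joined.
-/

theorem Fin.two_ne_iff (i j k : Fin 2) :
    i ≠ j ↔ (i = k ∧ j ≠ k) ∨ (i ≠ k ∧ j = k) := by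
  revert i j k; decide

namespace SimpleGraph

variable {V : Type*} {G : SimpleGraph V} {a b : V}

theorem reachable_sup_edge_iff (hab : G.Reachable a b) {u v : V} :
    (G ⊔ edge a b).Reachable u v ↔ G.Reachable u v := by
  refine ⟨fun h ↦ ?_, .mono le_sup_left⟩
  rw [reachable_iff_reflTransGen] at h
  refine Relation.reflTransGen_le_of_equivalence_of_le G.reachable_is_equivalence ?_ _ _ h
  rintro x y (hxy | hxy)
  · exact hxy.reachable
  · obtain ⟨⟨rfl, rfl⟩ | ⟨rfl, rfl⟩, -⟩ := (edge_adj ..).mp hxy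
    exacts [hab, hab.symm]

theorem IsBridge.sup_edge {e : Sym2 V} (he : G.IsBridge e)
    (hab : (G.deleteEdges {e}).Reachable a b) : (G ⊔ edge a b).IsBridge e := by
  induction e with | h x y =>
  rw [isBridge_iff] at he ⊢
  intro hxy
  refine he ((reachable_sup_edge_iff hab).mp (hxy.mono ?_))
  rw [deleteEdges_sup]
  exact sup_le_sup_left (deleteEdges_le _) _

theorem setOf_isBridge_sup_edge (hab : (G.deleteEdges {e | G.IsBridge e}).Reachable a b) :
    {e | (G ⊔ edge a b).IsBridge e} = {e | G.IsBridge e} := by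
  ext e
  refine ⟨IsBridge.anti le_sup_left, fun he ↦ he.sup_edge (hab.mono ?_)⟩
  exact deleteEdges_anti (Set.singleton_subset_iff.mpr he)

theorem not_isBridge_of_reachable_deleteEdges_setOf_isBridge
    (hab : (G.deleteEdges {e | G.IsBridge e}).Reachable a b) : ¬ G.IsBridge s(a, b) :=
  fun he ↦ isBridge_iff.mp he (hab.mono (deleteEdges_anti
    (Set.singleton_subset_iff.mpr (show s(a, b) ∈ {e | G.IsBridge e} from he))))

def Coloring.supEdge {α : Type*} (c : G.Coloring α) (hab : c a ≠ c b) :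
    (G ⊔ edge a b).Coloring α :=
  Coloring.mk c fun {x y} hxy ↦ by
    rcases hxy with hxy | hxy
    · exact c.valid hxy
    · obtain ⟨⟨rfl, rfl⟩ | ⟨rfl, rfl⟩, -⟩ := (edge_adj ..).mp hxy
      exacts [hab, hab.symm]

theorem Coloring.exists_completeBipartite_of_adj (c : G.Coloring (Fin 2))
    {C : G.ConnectedComponent}
    (hcomplete : ∀ a ∈ C.supp, ∀ b ∈ C.supp, c a ≠ c b → G.Adj a b)
    {x y : V} (hx : x ∈ C.supp) (hxy : G.Adj x y) :
    ∃ X Y : Set V, Disjoint X Y ∧ X ∪ Y = C.supp ∧ X.Nonempty ∧ Y.Nonempty ∧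
      ∀ a ∈ C.supp, ∀ b ∈ C.supp, (G.Adj a b ↔ ((a ∈ X ∧ b ∈ Y) ∨ (a ∈ Y ∧ b ∈ X))) := by
  refine ⟨{v ∈ C.supp | c v = c x}, {v ∈ C.supp | c v ≠ c x}, ?_, ?_,
    ⟨x, hx, rfl⟩, ⟨y, (C.mem_supp_congr_adj hxy).mp hx, (c.valid hxy).symm⟩, ?_⟩
  · exact Set.disjoint_left.mpr fun v hv hv' ↦ hv'.2 hv.2
  · ext v
    simp only [Set.mem_union, Set.mem_ofPred_eq]
    tauto
  · intro a ha b hb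
    simp only [Set.mem_ofPred_eq, ha, hb, true_and]
    rw [← Fin.two_ne_iff]
    exact ⟨c.valid, hcomplete a ha b hb⟩

theorem ConnectedComponent.exists_unique_or_exists_completeBipartite (c : G.Coloring (Fin 2))
    (C : G.ConnectedComponent) (hcomplete : ∀ a ∈ C.supp, ∀ b ∈ C.supp, c a ≠ c b → G.Adj a b) :
    (∃! v : V, G.connectedComponentMk v = C) ∨
      ∃ X Y : Set V, Disjoint X Y ∧ X ∪ Y = C.supp ∧ X.Nonempty ∧ Y.Nonempty ∧
        ∀ a ∈ C.supp, ∀ b ∈ C.supp, (G.Adj a b ↔ ((a ∈ X ∧ b ∈ Y) ∨ (a ∈ Y ∧ b ∈ X))) := by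
  obtain ⟨v, hv⟩ := C.exists_rep
  by_cases hsingle : ∀ w, G.connectedComponentMk w = C → w = v
  · exact .inl ⟨v, hv, hsingle⟩
  push Not at hsingle
  obtain ⟨w, hw, hwv⟩ := hsingle
  obtain ⟨y, hwy⟩ := mem_support_of_reachable hwv (ConnectedComponent.exact (hw.trans hv.symm))
  exact .inr (c.exists_completeBipartite_of_adj hcomplete hw hwy)

theorem adj_deleteEdges_setOf_isBridge_of_isMinimal (I : SimpleGraph V → ℝ)
    (hI : ∀ (H : SimpleGraph V) (u v : V), u ≠ v → ¬ H.Adj u v → I (H ⊔ edge u v) < I H)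
    (hGconn : G.Connected)
    (hmin : ∀ H : SimpleGraph V, H.Connected → H.Colorable 2 →
      {e : Sym2 V | H.IsBridge e} = {e : Sym2 V | G.IsBridge e} → I G ≤ I H)
    (c : G.Coloring (Fin 2)) (hab : (G.deleteEdges {e | G.IsBridge e}).Reachable a b)
    (hc : c a ≠ c b) : (G.deleteEdges {e | G.IsBridge e}).Adj a b := by
  by_cases hGab : G.Adj a b
  · exact deleteEdges_adj.mpr ⟨hGab, not_isBridge_of_reachable_deleteEdges_setOf_isBridge hab⟩
  have hle := hmin (G ⊔ edge a b) (hGconn.mono le_sup_left) ⟨c.supEdge hc⟩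
    (setOf_isBridge_sup_edge hab)
  exact absurd (hI G a b (ne_of_apply_ne c hc) hGab) hle.not_gt

end SimpleGraph

open SimpleGraph

theorem components_of_minimizer_complete_bipartite_general
    {V : Type*}
    (I : SimpleGraph V → ℝ)
    (hI : ∀ (H : SimpleGraph V) (u v : V), u ≠ v → ¬ H.Adj u v →
      I (H ⊔ SimpleGraph.fromEdgeSet {s(u, v)}) < I H)
    (G : SimpleGraph V) (hGconn : G.Connected) (hGbip : G.Colorable 2)
    (hmin : ∀ H : SimpleGraph V, H.Connected → H.Colorable 2 →
      {e : Sym2 V | H.IsBridge e} = {e : Sym2 V | G.IsBridge e} → I G ≤ I H) :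
    ∀ C : (G.deleteEdges {e : Sym2 V | G.IsBridge e}).ConnectedComponent,
      (∃! v : V, (G.deleteEdges {e : Sym2 V | G.IsBridge e}).connectedComponentMk v = C) ∨
      (∃ X Y : Set V, Disjoint X Y ∧ X ∪ Y = C.supp ∧ X.Nonempty ∧ Y.Nonempty ∧
        ∀ a ∈ C.supp, ∀ b ∈ C.supp,
          ((G.deleteEdges {e : Sym2 V | G.IsBridge e}).Adj a b ↔
            ((a ∈ X ∧ b ∈ Y) ∨ (a ∈ Y ∧ b ∈ X)))) := by
  intro C
  obtain ⟨c⟩ := hGbip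
  exact C.exists_unique_or_exists_completeBipartite (c.comp (Hom.ofLE (deleteEdges_le _)))
    fun a ha b hb hab ↦ adj_deleteEdges_setOf_isBridge_of_isMinimal I hI hGconn hmin c
      (C.reachable_of_mem_supp ha hb) hab

/-- If `G` minimizes a monotonically decreasing topological index `I` among all connected
bipartite graphs on the same `n` vertices whose set of cut edges (bridges) is the given set of
`k` cut edges, then every connected component of `G` minus its cut edges is a complete
bipartite graph or a single vertex. -/
theorem components_of_minimizer_complete_bipartite
    {V : Type*} [Fintype V] (n k : ℕ) (hV : Fintype.card V = n)
    (I : SimpleGraph V → ℝ)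
    (hI : ∀ (H : SimpleGraph V) (u v : V), u ≠ v → ¬ H.Adj u v →
      I (H ⊔ SimpleGraph.fromEdgeSet {s(u, v)}) < I H)
    (G : SimpleGraph V) (hGconn : G.Connected) (hGbip : G.Colorable 2)
    (hGcut : {e : Sym2 V | G.IsBridge e}.ncard = k)
    (hmin : ∀ H : SimpleGraph V, H.Connected → H.Colorable 2 →
      {e : Sym2 V | H.IsBridge e} = {e : Sym2 V | G.IsBridge e} → I G ≤ I H) :
    ∀ C : (G.deleteEdges {e : Sym2 V | G.IsBridge e}).ConnectedComponent,
      (∃! v : V, (G.deleteEdges {e : Sym2 V | G.IsBridge e}).connectedComponentMk v = C) ∨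
      (∃ X Y : Set V, Disjoint X Y ∧ X ∪ Y = C.supp ∧ X.Nonempty ∧ Y.Nonempty ∧
        ∀ a ∈ C.supp, ∀ b ∈ C.supp,
          ((G.deleteEdges {e : Sym2 V | G.IsBridge e}).Adj a b ↔
            ((a ∈ X ∧ b ∈ Y) ∨ (a ∈ Y ∧ b ∈ X)))) :=
  components_of_minimizer_complete_bipartite_general I hI G hGconn hGbip hmin
end

section
/- Let G be the graph obtained from a complete bipartite graph K_{s,t} by attaching a ≥ 1 pendent vertices to u and b ≥ 1 pendent vertices to v, where u and v are two distinct vertices in the same part of K_{s,t}, and let G' be obtained from G by moving all a pendent edges from u to v (so v has a+b pendent neighbors and u has none). Then W(G') − W(G) = −2ab, where W is the Wiener index. -/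
open Finset
open scoped Classical

/-- The graph obtained from the complete bipartite graph `K_{s,t}` (first part `Fin s`,
second part `Fin t`) by attaching `a` pendant vertices to the vertex `u` and `b` pendant
vertices to the vertex `v`, where `u v : Fin s` are in the same part. -/
def KstPend (s t a b : ℕ) (u v : Fin s) :
    SimpleGraph ((Fin s ⊕ Fin t) ⊕ (Fin a ⊕ Fin b)) :=
  SimpleGraph.fromRel (fun x y =>
    (∃ i j, x = Sum.inl (Sum.inl i) ∧ y = Sum.inl (Sum.inr j)) ∨
    (∃ p, x = Sum.inr (Sum.inl p) ∧ y = Sum.inl (Sum.inl u)) ∨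
    (∃ q, x = Sum.inr (Sum.inr q) ∧ y = Sum.inl (Sum.inl v)))

/-! Every vertex `x` of `KstPend s t a b u v` is a vertex of `K_{s,t}` or a pendant vertex; let
`anchor u v x` be `x` itself, resp. the vertex the pendant hangs from. A pendant vertex has its
anchor as its only neighbour, so for `x ≠ y` the distance is `depth x + depth y` plus the
`K_{s,t}`-distance `coreDist` of the anchors. The `depth` part of the Wiener index does not depend
on where the pendants hang; in the `coreDist` part only the `a * b` pairs of a pendant at `u` and
a pendant at `v` change, their anchors moving from distance 2 to distance 0. -/

theorem Fintype.sum_ite_eq_add_mul {α R : Type*} [Fintype α] [DecidableEq α] [CommRing R]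
    (w : α) (c d : R) : ∑ i, (if w = i then c else d) = c + (Fintype.card α - 1) * d := by
  have h (i : α) : (if w = i then c else d) = d + if w = i then c - d else 0 := by
    split_ifs <;> ring
  simp only [h, Finset.sum_add_distrib, Finset.sum_ite_eq, Finset.mem_univ, if_true,
    Finset.sum_const, Finset.card_univ, nsmul_eq_mul]
  ring

theorem Fintype.sum_ite_eq_add_mul' {α R : Type*} [Fintype α] [DecidableEq α] [CommRing R]
    (w : α) (c d : R) : ∑ i, (if i = w then c else d) = c + (Fintype.card α - 1) * d := by
  simpa only [eq_comm] using Fintype.sum_ite_eq_add_mul w c d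

namespace SimpleGraph

variable {V : Type*} {G : SimpleGraph V} {x y z w : V}

theorem dist_eq_two_of_adj_of_adj (hxz : G.Adj x z) (hzy : G.Adj z y) (hne : x ≠ y)
    (hxy : ¬G.Adj x y) : G.dist x y = 2 := by
  have h : G.edist x y = 2 := edist_eq_two_iff.mpr ⟨hne, hxy, z, hxz, hzy.symm⟩
  simp [dist, h]

theorem dist_eq_dist_add_one_of_adj_iff (hx : ∀ z, G.Adj x z ↔ z = w) (hy : y ≠ x)
    (hr : G.Reachable w y) : G.dist x y = G.dist w y + 1 := by
  have hxw : G.Adj x w := (hx w).2 rfl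
  apply le_antisymm
  · obtain ⟨p, hp⟩ := hr.exists_walk_length_eq_dist
    simpa [hp] using dist_le (Walk.cons hxw p)
  · obtain ⟨p, hp⟩ := (hxw.reachable.trans hr).exists_walk_length_eq_dist
    cases p with
    | nil => exact absurd rfl hy
    | cons h q =>
      obtain rfl := (hx _).1 h
      rw [← hp, Walk.length_cons]
      exact Nat.add_le_add_right (dist_le q) 1

end SimpleGraph

namespace KstPend

abbrev Vertex (s t a b : ℕ) : Type := (Fin s ⊕ Fin t) ⊕ (Fin a ⊕ Fin b)

def anchor {s t a b : ℕ} (u v : Fin s) : Vertex s t a b → Fin s ⊕ Fin t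
  | .inl c => c
  | .inr (.inl _) => .inl u
  | .inr (.inr _) => .inl v

def depth {α β : Type*} : α ⊕ β → ℕ
  | .inl _ => 0
  | .inr _ => 1

def coreDist {α β : Type*} [DecidableEq α] [DecidableEq β] : α ⊕ β → α ⊕ β → ℕ
  | .inl i, .inl j => if i = j then 0 else 2
  | .inr i, .inr j => if i = j then 0 else 2
  | _, _ => 1

variable {s t a b : ℕ} {u v : Fin s}

@[simp]
theorem coreDist_self {α β : Type*} [DecidableEq α] [DecidableEq β] (c : α ⊕ β) :
    coreDist c c = 0 := by
  cases c <;> simp [coreDist]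

theorem coreDist_comm {α β : Type*} [DecidableEq α] [DecidableEq β] (c c' : α ⊕ β) :
    coreDist c c' = coreDist c' c := by
  cases c <;> cases c' <;> simp [coreDist, eq_comm]

theorem adj_inl_inr (i : Fin s) (j : Fin t) :
    (KstPend s t a b u v).Adj (.inl (.inl i)) (.inl (.inr j)) := by
  simp [KstPend]

theorem adj_inr_iff (e : Fin a ⊕ Fin b) (y : Vertex s t a b) :
    (KstPend s t a b u v).Adj (.inr e) y ↔ y = .inl (anchor u v (.inr e)) := by
  rcases e with p | q <;> rcases y with (i | j) | (p' | q') <;> simp [KstPend, anchor, eq_comm]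

theorem dist_inl_inl (ht : 0 < t) (c c' : Fin s ⊕ Fin t) :
    (KstPend s t a b u v).dist (.inl c) (.inl c') = coreDist c c' := by
  rcases c with i | j <;> rcases c' with i' | j'
  · by_cases h : i = i'
    · simp [h, coreDist]
    · rw [SimpleGraph.dist_eq_two_of_adj_of_adj (adj_inl_inr i ⟨0, ht⟩)
        (adj_inl_inr i' ⟨0, ht⟩).symm (by simpa using h) (by simp [KstPend])]
      simp [coreDist, h]
  · simpa [coreDist] using SimpleGraph.dist_eq_one_iff_adj.mpr (adj_inl_inr i j')
  · simpa [coreDist] using SimpleGraph.dist_eq_one_iff_adj.mpr (adj_inl_inr i' j).symm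
  · by_cases h : j = j'
    · simp [h, coreDist]
    · rw [SimpleGraph.dist_eq_two_of_adj_of_adj (adj_inl_inr u j).symm
        (adj_inl_inr u j') (by simpa using h) (by simp [KstPend])]
      simp [coreDist, h]

theorem reachable_inl_inl (ht : 0 < t) (c c' : Fin s ⊕ Fin t) :
    (KstPend s t a b u v).Reachable (.inl c) (.inl c') := by
  by_cases h : c = c'
  · rw [h]
  · apply SimpleGraph.Reachable.of_dist_ne_zero
    rw [dist_inl_inl ht]
    rcases c with i | j <;> rcases c' with i' | j' <;> simp_all [coreDist]

theorem reachable_inl (ht : 0 < t) (c : Fin s ⊕ Fin t) (y : Vertex s t a b) :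
    (KstPend s t a b u v).Reachable (.inl c) y := by
  rcases y with c' | e
  · exact reachable_inl_inl ht c c'
  · exact (reachable_inl_inl ht _ _).trans ((adj_inr_iff e _).2 rfl).symm.reachable

theorem dist_inr (ht : 0 < t) (e : Fin a ⊕ Fin b) {y : Vertex s t a b}
    (hy : y ≠ .inr e) :
    (KstPend s t a b u v).dist (.inr e) y =
      (KstPend s t a b u v).dist (.inl (anchor u v (.inr e))) y + 1 :=
  SimpleGraph.dist_eq_dist_add_one_of_adj_iff (adj_inr_iff e) hy (reachable_inl ht _ _)

theorem dist_inl (ht : 0 < t) (c : Fin s ⊕ Fin t) (y : Vertex s t a b) :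
    (KstPend s t a b u v).dist (.inl c) y = depth y + coreDist c (anchor u v y) := by
  rcases y with c' | e
  · simp [dist_inl_inl ht, depth, anchor]
  · rw [SimpleGraph.dist_comm, dist_inr ht e (by simp), dist_inl_inl ht, coreDist_comm, depth,
      add_comm]

theorem dist_eq (ht : 0 < t) (x y : Vertex s t a b) :
    (KstPend s t a b u v).dist x y =
      (if x = y then 0 else depth x + depth y) + coreDist (anchor u v x) (anchor u v y) := by
  by_cases hxy : x = y
  · simp [hxy]
  rw [if_neg hxy]
  rcases x with c | e
  · simp [dist_inl ht, depth, anchor]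
  · rw [dist_inr ht e (Ne.symm hxy), dist_inl ht, depth]
    ring

theorem sum_coreDist_anchor :
    ∑ x : Vertex s t a b, ∑ y : Vertex s t a b,
      (coreDist (anchor u v x) (anchor u v y) : ℚ) =
      2 * s * (s - 1) + 2 * t * (t - 1) + 2 * s * t + 2 * (a + b) * (2 * (s - 1) + t) +
        if u = v then 0 else (4 * a * b : ℚ) := by
  simp only [Fintype.sum_sum_type, anchor, coreDist, Nat.cast_ite]
  simp only [CharP.cast_eq_zero, Nat.cast_ofNat, Nat.cast_one, Fintype.sum_ite_eq_add_mul,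
    Fintype.sum_ite_eq_add_mul', Fintype.card_fin, zero_add, sum_const, card_univ, nsmul_eq_mul,
    mul_one, sum_add_distrib, smul_add, smul_ite, ↓reduceIte]
  obtain rfl | huv := eq_or_ne u v
  · simp only [if_true]
    ring
  · simp only [huv, huv.symm, if_false]
    ring

theorem wiener_eq (ht : 0 < t) :
    wiener (KstPend s t a b u v) =
      1 / 2 * (∑ x : Vertex s t a b, ∑ y,
          ((if x = y then 0 else depth x + depth y : ℕ) : ℚ)) +
        1 / 2 * ∑ x : Vertex s t a b, ∑ y : Vertex s t a b,
          (coreDist (anchor u v x) (anchor u v y) : ℚ) := by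
  simp only [wiener, dist_eq ht, Nat.cast_add, Finset.sum_add_distrib]
  ring

end KstPend

theorem wiener_move_pendants_general (s t a b : ℕ) (ht : 2 ≤ t) (u v : Fin s) (huv : u ≠ v) :
    wiener (KstPend s t a b v v) - wiener (KstPend s t a b u v) = -2 * (a : ℚ) * b := by
  have ht_pos : 0 < t := by omega
  rw [KstPend.wiener_eq ht_pos, KstPend.wiener_eq ht_pos, KstPend.sum_coreDist_anchor,
    KstPend.sum_coreDist_anchor, if_pos rfl, if_neg huv]
  ring

/-- Moving all `a` pendant edges from `u` to `v` changes the Wiener index by exactly `-2ab`. -/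
theorem wiener_move_pendants (s t a b : ℕ) (hs : 2 ≤ s) (ht : 2 ≤ t)
    (ha : 1 ≤ a) (hb : 1 ≤ b) (u v : Fin s) (huv : u ≠ v) :
    wiener (KstPend s t a b v v) - wiener (KstPend s t a b u v) = -2 * (a : ℚ) * b :=
  wiener_move_pendants_general s t a b ht u v huv
end

section
/- Let G be obtained from K_{s,t} (2 ≤ s ≤ t) by attaching a ≥ 1 pendent vertices to a vertex x_p in the part of size s and b ≥ 1 pendent vertices to a vertex y_q in the part of size t, and let G' be obtained by moving the b pendent edges from y_q to x_p. Then W(G') < W(G), where W is the Wiener index. -/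
open Finset
open scoped Classical

/-- The graph obtained from the complete bipartite graph `K_{s,t}` (parts `Fin s` and `Fin t`)
by attaching `a` pendant vertices to the vertex `xp` of the part of size `s` and `b` pendant
vertices to the vertex `w` (which is `y_q` in the part of size `t` for the graph `G`, and
`x_p` itself for the graph `G'`). -/
def KstPend2 (s t a b : ℕ) (xp : Fin s) (w : Fin s ⊕ Fin t) :
    SimpleGraph ((Fin s ⊕ Fin t) ⊕ (Fin a ⊕ Fin b)) :=
  SimpleGraph.fromRel (fun x y =>
    (∃ i j, x = Sum.inl (Sum.inl i) ∧ y = Sum.inl (Sum.inr j)) ∨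
    (∃ p, x = Sum.inr (Sum.inl p) ∧ y = Sum.inl (Sum.inl xp)) ∨
    (∃ q, x = Sum.inr (Sum.inr q) ∧ y = Sum.inl w))

/-! Every distance is explicit: `K_{s,t}` has diameter two, and a pendant vertex is one step
farther than its neighbour from every other vertex. Summing gives closed forms for both Wiener
indices. A pendant vertex moved from `y_q` to `x_p` gets closer to the `t - 1` other vertices of
`y_q`'s part and to the `a` pendants at `x_p`, farther from the `s - 1` other vertices of `x_p`'s
part, and the changes at `x_p` and `y_q` cancel; so the index drops by `b (t - s + a)`. -/

lemma Fintype.sum_ite_eq_else {ι R : Type*} [Fintype ι] [DecidableEq ι] [CommRing R] (i : ι)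
    (c d : R) : ∑ j, (if i = j then c else d) = c + (Fintype.card ι - 1) * d := by
  have h (j : ι) : (if i = j then c else d) = d + if i = j then c - d else 0 := by
    split <;> ring
  simp only [h, Finset.sum_add_distrib, Finset.sum_const, Finset.sum_ite_eq, Finset.mem_univ,
    if_true, Finset.card_univ, nsmul_eq_mul]
  ring

lemma Fintype.sum_ite_eq_else' {ι R : Type*} [Fintype ι] [DecidableEq ι] [CommRing R] (i : ι)
    (c d : R) : ∑ j, (if j = i then c else d) = c + (Fintype.card ι - 1) * d := by
  simp only [eq_comm (b := i), Fintype.sum_ite_eq_else]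

namespace SimpleGraph

variable {V : Type*} {G : SimpleGraph V} {u v w : V}

lemma dist_eq_two_of_adj_of_adj_s9 (huv : u ≠ v) (hn : ¬ G.Adj u v) (huw : G.Adj u w)
    (hwv : G.Adj w v) : G.dist u v = 2 := by
  have h : G.edist u v = 2 := edist_eq_two_iff.mpr ⟨huv, hn, w, huw, hwv.symm⟩
  rw [← ENat.natCast_inj, (huw.reachable.trans hwv.reachable).coe_dist_eq_edist, h]
  rfl

lemma dist_eq_dist_add_one_of_forall_adj_iff (hu : ∀ x, G.Adj u x ↔ x = w) (hvu : v ≠ u)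
    (hwv : G.Reachable w v) : G.dist u v = G.dist w v + 1 := by
  have huw : G.Adj u w := (hu w).mpr rfl
  refine le_antisymm ?_ ?_
  · have := huw.reachable.dist_triangle_left v
    rw [dist_eq_one_iff_adj.mpr huw] at this
    omega
  · obtain ⟨p, hp⟩ := (huw.reachable.trans hwv).exists_walk_length_eq_dist
    cases p with
    | nil => exact absurd rfl hvu
    | cons h q =>
      obtain rfl := (hu _).mp h
      rw [← hp, Walk.length_cons]
      exact Nat.add_le_add_right (dist_le q) 1

end SimpleGraph

namespace KstPend2

variable {s t a b : ℕ} {xp : Fin s} {w : Fin s ⊕ Fin t}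

local notation "K" => KstPend2 s t a b xp w
local notation "X" i => (Sum.inl (Sum.inl i) : (Fin s ⊕ Fin t) ⊕ (Fin a ⊕ Fin b))
local notation "Y" j => (Sum.inl (Sum.inr j) : (Fin s ⊕ Fin t) ⊕ (Fin a ⊕ Fin b))
local notation "A" p => (Sum.inr (Sum.inl p) : (Fin s ⊕ Fin t) ⊕ (Fin a ⊕ Fin b))
local notation "B" q => (Sum.inr (Sum.inr q) : (Fin s ⊕ Fin t) ⊕ (Fin a ⊕ Fin b))

lemma adj_X_Y (i : Fin s) (j : Fin t) : (K).Adj (X i) (Y j) := by simp [KstPend2]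

lemma not_adj_X_X (i j : Fin s) : ¬ (K).Adj (X i) (X j) := by simp [KstPend2]

lemma not_adj_Y_Y (i j : Fin t) : ¬ (K).Adj (Y i) (Y j) := by simp [KstPend2]

lemma adj_A_iff (p : Fin a) (v) : (K).Adj (A p) v ↔ v = X xp := by
  constructor
  · rintro ⟨-, h | h | h⟩ <;> obtain _ | _ | _ := h <;> simp_all
  · rintro rfl; simp [KstPend2]

lemma adj_B_iff (q : Fin b) (v) : (K).Adj (B q) v ↔ v = Sum.inl w := by
  constructor
  · rintro ⟨-, h | h | h⟩ <;> obtain _ | _ | _ := h <;> simp_all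
  · rintro rfl; simp [KstPend2]

lemma preconnected (ht : 0 < t) : (K).Preconnected := by
  have hY : ∀ j, (K).Reachable (Y ⟨0, ht⟩) (Y j) := fun j =>
    (adj_X_Y xp ⟨0, ht⟩).reachable.symm.trans (adj_X_Y xp j).reachable
  have hcore : ∀ v, (K).Reachable (Y ⟨0, ht⟩) (Sum.inl v) := by
    rintro (i | j)
    · exact (adj_X_Y i ⟨0, ht⟩).reachable.symm
    · exact hY j
  suffices ∀ v, (K).Reachable (Y ⟨0, ht⟩) v from fun u v => (this u).symm.trans (this v)
  rintro ((i | j) | (p | q))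
  · exact hcore (.inl i)
  · exact hY j
  · exact (hcore (.inl xp)).trans ((adj_A_iff p _).mpr rfl).reachable.symm
  · exact (hcore w).trans ((adj_B_iff q _).mpr rfl).reachable.symm

lemma dist_X_X (ht : 0 < t) (i j : Fin s) :
    (K).dist (X i) (X j) = if i = j then 0 else 2 := by
  split_ifs with h
  · rw [h, SimpleGraph.dist_self]
  · exact SimpleGraph.dist_eq_two_of_adj_of_adj_s9 (by simpa using h) (not_adj_X_X i j)
      (adj_X_Y i ⟨0, ht⟩) (adj_X_Y j ⟨0, ht⟩).symm

lemma dist_Y_Y (i j : Fin t) : (K).dist (Y i) (Y j) = if i = j then 0 else 2 := by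
  split_ifs with h
  · rw [h, SimpleGraph.dist_self]
  · exact SimpleGraph.dist_eq_two_of_adj_of_adj_s9 (by simpa using h) (not_adj_Y_Y i j)
      (adj_X_Y xp i).symm (adj_X_Y xp j)

lemma dist_X_Y (i : Fin s) (j : Fin t) : (K).dist (X i) (Y j) = 1 :=
  SimpleGraph.dist_eq_one_iff_adj.mpr (adj_X_Y i j)

lemma dist_Y_X (j : Fin t) (i : Fin s) : (K).dist (Y j) (X i) = 1 :=
  SimpleGraph.dist_eq_one_iff_adj.mpr (adj_X_Y i j).symm

lemma dist_A_left (ht : 0 < t) (p : Fin a) {v} (hv : v ≠ A p) :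
    (K).dist (A p) v = (K).dist (X xp) v + 1 :=
  SimpleGraph.dist_eq_dist_add_one_of_forall_adj_iff (adj_A_iff p) hv (preconnected ht _ _)

lemma dist_A_right (ht : 0 < t) (p : Fin a) {v} (hv : v ≠ A p) :
    (K).dist v (A p) = (K).dist v (X xp) + 1 := by
  rw [SimpleGraph.dist_comm, dist_A_left ht p hv, SimpleGraph.dist_comm]

lemma dist_A_A (ht : 0 < t) (p p' : Fin a) :
    (K).dist (A p) (A p') = if p = p' then 0 else 2 := by
  split_ifs with h
  · rw [h, SimpleGraph.dist_self]
  · rw [dist_A_left ht p (by simpa [eq_comm] using h), dist_A_right ht p' (by simp),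
      SimpleGraph.dist_self]

lemma dist_B_left (ht : 0 < t) (q : Fin b) {v} (hv : v ≠ B q) :
    (K).dist (B q) v = (K).dist (Sum.inl w) v + 1 :=
  SimpleGraph.dist_eq_dist_add_one_of_forall_adj_iff (adj_B_iff q) hv (preconnected ht _ _)

lemma dist_B_right (ht : 0 < t) (q : Fin b) {v} (hv : v ≠ B q) :
    (K).dist v (B q) = (K).dist v (Sum.inl w) + 1 := by
  rw [SimpleGraph.dist_comm, dist_B_left ht q hv, SimpleGraph.dist_comm]

lemma dist_B_B (ht : 0 < t) (q q' : Fin b) :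
    (K).dist (B q) (B q') = if q = q' then 0 else 2 := by
  split_ifs with h
  · rw [h, SimpleGraph.dist_self]
  · rw [dist_B_left ht q (by simpa [eq_comm] using h), dist_B_right ht q' (by simp),
      SimpleGraph.dist_self]

end KstPend2

lemma wiener_KstPend2_inl (s t a b : ℕ) (ht : 0 < t) (xp : Fin s) :
    wiener (KstPend2 s t a b xp (Sum.inl xp)) =
      s * (s - 1) + t * (t - 1) + s * t + a * (a - 1) + a * (3 * s - 2) + 2 * a * t
        + b * (b - 1) + b * (3 * s - 2) + 2 * b * t + 2 * a * b := by
  simp only [wiener, one_div, Fintype.sum_sum_type, sum_add_distrib, KstPend2.dist_X_X ht,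
    Nat.cast_ite, CharP.cast_eq_zero, Nat.cast_ofNat, Fintype.sum_ite_eq_else, Fintype.card_fin,
    zero_add, sum_const, card_univ, nsmul_eq_mul, KstPend2.dist_Y_X, Nat.cast_one, mul_one, ne_eq,
    reduceCtorEq, not_false_eq_true, KstPend2.dist_A_left ht, Nat.cast_add,
    KstPend2.dist_B_left ht, KstPend2.dist_X_Y, KstPend2.dist_Y_Y, Nat.reduceAdd,
    KstPend2.dist_A_right ht, mul_ite, mul_zero, Fintype.sum_ite_eq_else', Fintype.card_sum,
    KstPend2.dist_A_A ht, Sum.inr.injEq, KstPend2.dist_B_right ht, KstPend2.dist_B_B ht]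
  ring

lemma wiener_KstPend2_inr (s t a b : ℕ) (xp : Fin s) (yq : Fin t) :
    wiener (KstPend2 s t a b xp (Sum.inr yq)) =
      s * (s - 1) + t * (t - 1) + s * t + a * (a - 1) + a * (3 * s - 2) + 2 * a * t
        + b * (b - 1) + 2 * b * s + b * (3 * t - 2) + 3 * a * b := by
  have ht : 0 < t := yq.pos
  simp only [wiener, one_div, Fintype.sum_sum_type, sum_add_distrib, KstPend2.dist_X_X ht,
    Nat.cast_ite, CharP.cast_eq_zero, Nat.cast_ofNat, Fintype.sum_ite_eq_else, Fintype.card_fin,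
    zero_add, sum_const, card_univ, nsmul_eq_mul, KstPend2.dist_Y_X, Nat.cast_one, mul_one, ne_eq,
    reduceCtorEq, not_false_eq_true, KstPend2.dist_A_left ht, Nat.cast_add,
    KstPend2.dist_B_left ht, KstPend2.dist_X_Y, KstPend2.dist_Y_Y, Nat.reduceAdd,
    KstPend2.dist_A_right ht, mul_ite, mul_zero, Fintype.sum_ite_eq_else', Fintype.card_sum,
    KstPend2.dist_A_A ht, Sum.inr.injEq, KstPend2.dist_B_right ht, KstPend2.dist_B_B ht]
  ring

theorem wiener_move_pendants_across_general (s t a b : ℕ) (hst : s ≤ t)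
    (ha : 1 ≤ a) (hb : 1 ≤ b) (xp : Fin s) (yq : Fin t) :
    wiener (KstPend2 s t a b xp (Sum.inl xp)) < wiener (KstPend2 s t a b xp (Sum.inr yq)) := by
  rw [wiener_KstPend2_inl s t a b yq.pos, wiener_KstPend2_inr]
  have hgap : (0 : ℚ) < b * (t - s + a) :=
    mul_pos (by exact_mod_cast hb)
      (by linarith [(Nat.cast_le.mpr hst : (s : ℚ) ≤ t), (Nat.one_le_cast.mpr ha : (1 : ℚ) ≤ a)])
  linarith

/-- Moving the `b` pendant edges from `y_q` (in the part of size `t`) to `x_p`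
(in the part of size `s`, `2 ≤ s ≤ t`) strictly decreases the Wiener index. -/
theorem wiener_move_pendants_across (s t a b : ℕ) (hs : 2 ≤ s) (hst : s ≤ t)
    (ha : 1 ≤ a) (hb : 1 ≤ b) (xp : Fin s) (yq : Fin t) :
    wiener (KstPend2 s t a b xp (Sum.inl xp)) < wiener (KstPend2 s t a b xp (Sum.inr yq)) :=
  wiener_move_pendants_across_general s t a b hst ha hb xp yq
end

section
/- For positive integers n, k, x with 2 ≤ x ≤ n−k−x, the hyper-Wiener index of B_k(x, n−k−x) equals 2x² + (5k−2n)x + (3/2)n² − (3/2)n − 5k. -/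
open Finset
open scoped Classical

/-- `Bgraph x y k w`: the bipartite graph obtained from the complete bipartite graph
`K_{x,y}` (parts `Fin x` and `Fin y`) by attaching `k` pendant vertices to the vertex `w`
of the part of size `x`. With `y = n - k - x` this is the graph `B_k(x, n-k-x)`. -/
def Bgraph (x y k : ℕ) (w : Fin x) : SimpleGraph ((Fin x ⊕ Fin y) ⊕ Fin k) :=
  SimpleGraph.fromRel (fun p q =>
    (∃ i j, p = Sum.inl (Sum.inl i) ∧ q = Sum.inl (Sum.inr j)) ∨
    (∃ m, p = Sum.inr m ∧ q = Sum.inl (Sum.inl w)))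

/-!
In `B_k(x, y)` every distance is read off from `K_{x,y}`: distance 1 across the two parts and
2 within a part, while a pendant vertex, whose only neighbour is `w`, sees every other vertex at
its distance from `w` plus one, i.e. at distance 1, 2 or 3. Summing `d + d²` over the nine blocks
of ordered pairs gives the formula.
-/

namespace SimpleGraph

variable {V : Type*} {G : SimpleGraph V} {u v c : V}

lemma dist_eq_two_of_adj_of_adj_s12 (hne : u ≠ v) (hnadj : ¬G.Adj u v) (huc : G.Adj u c)
    (hcv : G.Adj c v) : G.dist u v = 2 := by
  have hr : G.Reachable u v := huc.reachable.trans hcv.reachable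
  have h := edist_eq_two_iff.mpr ⟨hne, hnadj, ⟨c, huc, hcv.symm⟩⟩
  rw [← hr.coe_dist_eq_edist] at h
  exact_mod_cast h

lemma dist_eq_dist_add_one_of_pendant (huc : G.Adj u c) (hpend : ∀ z, G.Adj u z → z = c)
    (hne : u ≠ v) (hcv : G.Reachable c v) : G.dist u v = G.dist c v + 1 := by
  refine le_antisymm ?_ ?_
  · have := hcv.dist_triangle_right u
    rw [dist_eq_one_iff_adj.mpr huc] at this
    omega
  · obtain ⟨p, hp⟩ := (huc.reachable.trans hcv).exists_walk_length_eq_dist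
    cases p with
    | nil => exact absurd rfl hne
    | cons h q =>
      obtain rfl := hpend _ h
      rw [← hp, Walk.length_cons]
      exact Nat.add_le_add_right (dist_le q) 1

end SimpleGraph

lemma Fintype.sum_ite_eq_add {α R : Type*} [Fintype α] [DecidableEq α] [Ring R] (i : α)
    (a b : R) :
    ∑ j, (if i = j then a else b) = a + (Fintype.card α - 1) * b := by
  rw [← Finset.add_sum_erase _ _ (Finset.mem_univ i),
    Finset.sum_congr rfl fun j hj => if_neg (Finset.ne_of_mem_erase hj).symm, Finset.sum_const,
    Finset.card_erase_of_mem (Finset.mem_univ i), Finset.card_univ, nsmul_eq_mul,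
    Nat.cast_pred (Fintype.card_pos_iff.mpr ⟨i⟩), if_pos rfl]

namespace Bgraph

open SimpleGraph

variable {x y k : ℕ} {w : Fin x}

lemma adj_inl_inr (i : Fin x) (j : Fin y) :
    (Bgraph x y k w).Adj (.inl (.inl i)) (.inl (.inr j)) := by
  simp [Bgraph]

lemma adj_pendant (m : Fin k) : (Bgraph x y k w).Adj (.inr m) (.inl (.inl w)) := by
  simp [Bgraph]

lemma dist_inl_inr (i : Fin x) (j : Fin y) :
    (Bgraph x y k w).dist (.inl (.inl i)) (.inl (.inr j)) = 1 :=
  dist_eq_one_iff_adj.mpr (adj_inl_inr i j)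

lemma dist_inl_inl (hy : 0 < y) (i j : Fin x) :
    (Bgraph x y k w).dist (.inl (.inl i)) (.inl (.inl j)) = if i = j then 0 else 2 := by
  split_ifs with h
  · simp [h]
  · exact dist_eq_two_of_adj_of_adj_s12 (by simpa) (by simp [Bgraph])
      (adj_inl_inr i ⟨0, hy⟩) (adj_inl_inr j _).symm

lemma dist_inr_inr (i j : Fin y) :
    (Bgraph x y k w).dist (.inl (.inr i)) (.inl (.inr j)) = if i = j then 0 else 2 := by
  split_ifs with h
  · simp [h]
  · exact dist_eq_two_of_adj_of_adj_s12 (by simpa) (by simp [Bgraph])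
      (adj_inl_inr w i).symm (adj_inl_inr w j)

lemma dist_pendant_inr (m : Fin k) (j : Fin y) :
    (Bgraph x y k w).dist (.inr m) (.inl (.inr j)) = 2 :=
  dist_eq_two_of_adj_of_adj_s12 (by simp) (by simp [Bgraph]) (adj_pendant m) (adj_inl_inr w j)

lemma dist_pendant_pendant (m m' : Fin k) :
    (Bgraph x y k w).dist (.inr m) (.inr m') = if m = m' then 0 else 2 := by
  split_ifs with h
  · simp [h]
  · exact dist_eq_two_of_adj_of_adj_s12 (by simpa) (by simp [Bgraph])
      (adj_pendant m) (adj_pendant m').symm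

lemma dist_pendant_inl (hy : 0 < y) (m : Fin k) (i : Fin x) :
    (Bgraph x y k w).dist (.inr m) (.inl (.inl i)) = if w = i then 1 else 3 := by
  have hwi : (Bgraph x y k w).Reachable (.inl (.inl w)) (.inl (.inl i)) :=
    (adj_inl_inr w ⟨0, hy⟩).reachable.trans (adj_inl_inr i _).symm.reachable
  rw [dist_eq_dist_add_one_of_pendant (adj_pendant m) (by simp [Bgraph]) (by simp) hwi,
    dist_inl_inl hy]
  split_ifs <;> rfl

lemma hyperWiener_eq (hy : 0 < y) :
    hyperWiener (Bgraph x y k w) = 3 / 2 * ((x : ℚ) ^ 2 - x) + x * y + 3 / 2 * ((y : ℚ) ^ 2 - y)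
      + k * (6 * x - 5) + 3 * y * k + 3 / 2 * ((k : ℚ) ^ 2 - k) := by
  simp only [hyperWiener, Fintype.sum_sum_type, dist_inl_inl hy, dist_inl_inr, dist_inr_inr,
    dist_pendant_inl hy, dist_pendant_inr, dist_pendant_pendant,
    dist_comm (u := Sum.inl (Sum.inr _)) (v := Sum.inl (Sum.inl _)),
    dist_comm (u := Sum.inl _) (v := Sum.inr _)]
  simp only [Nat.cast_ite, apply_ite (fun d : ℚ => d ^ 2), Finset.sum_add_distrib,
    Fintype.sum_ite_eq_add, ← Finset.mul_sum, Finset.sum_const, Finset.card_univ,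
    Fintype.card_fin, nsmul_eq_mul]
  push_cast
  ring

end Bgraph

theorem hyperWiener_Bgraph_general (n k x y : ℕ) (hn : n = x + y + k) (hxy : x ≤ y) (w : Fin x) :
    hyperWiener (Bgraph x y k w)
      = 2 * (x : ℚ)^2 + (5 * (k : ℚ) - 2 * n) * x
          + (3/2) * (n : ℚ)^2 - (3/2) * n - 5 * k := by
  rw [Bgraph.hyperWiener_eq (w.pos.trans_le hxy), hn]
  push_cast
  ring

/-- Hyper-Wiener index of `B_k(x, n-k-x)` (here `y = n - k - x`). -/
theorem hyperWiener_Bgraph (n k x y : ℕ) (hn : n = x + y + k) (hk : 1 ≤ k)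
    (hx : 2 ≤ x) (hxy : x ≤ y) (w : Fin x) :
    hyperWiener (Bgraph x y k w)
      = 2 * (x : ℚ)^2 + (5 * (k : ℚ) - 2 * n) * x
          + (3/2) * (n : ℚ)^2 - (3/2) * n - 5 * k :=
  hyperWiener_Bgraph_general n k x y hn hxy w
end
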